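/- arXiv:2103.01186 — 3 statements merged into one kernel-verified Lean document; each statement's English description precedes it below -/
import Mathlib

section
/- Let k ∈ ℕ and let X = (X₁,…,X_k) and X′ = (X′₁,…,X′_k) be ℝ^k-valued random vectors, possibly defined on different probability spaces. Suppose that for every (z₁,…,z_k) ∈ ℕ^k (positive integers) one has E[∏_{i=1}^k exp(−z_i·exp(X_i))] = E[∏_{i=1}^k exp(−z_i·exp(X′_i))]. Then X and X′ have the same distribution on ℝ^k. -/
open MeasureTheory Filter Set Topology ProbabilityTheory
open scoped ENNReal NNReal

attribute [local instance] MeasureTheory.Measure.Subtype.measureSpace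

noncomputable section

namespace LineEnsembles

/-- Borel measurable space structure on spaces of continuous maps. -/
instance (priority := 100) instMeasCM {X : Type} [TopologicalSpace X] :
    MeasurableSpace C(X, ℝ) := borel _

/-- The Gaussian heat kernel `p(t; x, y) = exp(-(x-y)²/(2t))/√(2πt)`. -/
def heatK (t x y : ℝ) : ℝ :=
  Real.exp (-((y - x) ^ 2) / (2 * t)) / Real.sqrt (2 * Real.pi * t)

/-- The density (with respect to Lebesgue measure on `ℝ^{m+1}`) of the finite-dimensional
distribution of the Brownian bridge from `(a,x)` to `(b,y)` at times `t 0 < ... < t m`. -/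
def bridgeDensity (a b x y : ℝ) {m : ℕ} (t : Fin (m + 1) → ℝ) (z : Fin (m + 1) → ℝ) : ℝ :=
  (heatK (t 0 - a) x (z 0) *
      (∏ i : Fin m, heatK (t i.succ - t i.castSucc) (z i.castSucc) (z i.succ)) *
      heatK (b - t (Fin.last m)) (z (Fin.last m)) y) / heatK (b - a) x y

/-- `μ` is the law, on `C([a,b],ℝ)`, of the Brownian bridge from `x` at time `a` to `y` at
time `b` with diffusion parameter 1: it is a probability measure whose finite-dimensional
distributions at interior times have the prescribed Gaussian densities. -/
def IsBrownianBridge (a b x y : ℝ) (μ : Measure C(↥(Icc a b), ℝ)) : Prop :=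
  IsProbabilityMeasure μ ∧
    ∀ (m : ℕ) (t : Fin (m + 1) → ℝ) (ht : ∀ i, t i ∈ Ioo a b), StrictMono t →
      Measure.map (fun ϕ : C(↥(Icc a b), ℝ) => fun i => ϕ ⟨t i, Ioo_subset_Icc_self (ht i)⟩) μ =
        MeasureTheory.volume.withDensity fun z => ENNReal.ofReal (bridgeDensity a b x y t z)

/-- `μ` is the law of `k` independent Brownian bridges on `[a,b]`, the `i`-th going from
`x i` at time `a` to `y i` at time `b`. -/
def IsFreeBridgeEnsemble (a b : ℝ) (k : ℕ) (x y : Fin k → ℝ)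
    (μ : Measure (Fin k → C(↥(Icc a b), ℝ))) : Prop :=
  IsProbabilityMeasure μ ∧
    iIndepFun
      (fun (i : Fin k) (Q : Fin k → C(↥(Icc a b), ℝ)) => Q i) μ ∧
    ∀ i, IsBrownianBridge a b (x i) (y i) (Measure.map (fun Q => Q i) μ)

/-- The curves of a `k`-curve ensemble, extended by the boundary data `f` (above, index `-1`)
and `g` (below, index `k`). -/
def curveE {a b : ℝ} (k : ℕ) (f g : ↥(Icc a b) → EReal)
    (Q : Fin k → C(↥(Icc a b), ℝ)) (j : ℤ) : ↥(Icc a b) → EReal :=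
  if h0 : j < 0 then f
  else if h : j < (k : ℤ) then fun u => ((Q ⟨j.toNat, by omega⟩ u : ℝ) : EReal)
  else g

/-- The Boltzmann weight `W_H` of an ensemble of `k` curves on `[a,b]` with boundary data
`(f,g)`. -/
def boltzmannWeight (H : EReal → ℝ) (a b : ℝ) (k : ℕ) (f g : ↥(Icc a b) → EReal)
    (Q : Fin k → C(↥(Icc a b), ℝ)) : ℝ :=
  Real.exp (-(∑ j ∈ Finset.range (k + 1),
    ∫ u : ↥(Icc a b), H (curveE k f g Q (j : ℤ) u - curveE k f g Q ((j : ℤ) - 1) u)))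

/-- `ν` is the `⟦1,k⟧ × (a,b)`-indexed `H`-Brownian bridge line ensemble with entrance data
`x`, exit data `y` and boundary data `(f,g)`:  the probability measure whose Radon-Nikodym
derivative with respect to the law of `k` independent Brownian bridges is proportional to the
Boltzmann weight. -/
def IsHBridgeEnsemble (H : EReal → ℝ) (a b : ℝ) (k : ℕ) (x y : Fin k → ℝ)
    (f g : ↥(Icc a b) → EReal) (ν : Measure (Fin k → C(↥(Icc a b), ℝ))) : Prop :=
  ∃ μ : Measure (Fin k → C(↥(Icc a b), ℝ)), IsFreeBridgeEnsemble a b k x y μ ∧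
    ν = (∫⁻ Q, ENNReal.ofReal (boltzmannWeight H a b k f g Q) ∂μ)⁻¹ •
        μ.withDensity fun Q => ENNReal.ofReal (boltzmannWeight H a b k f g Q)

/-- A Hamiltonian: a continuous function `H : [-∞, ∞) → [0, ∞)`, encoded as a function on
`EReal` whose values and continuity are only required away from `+∞`. -/
def IsHamiltonian (H : EReal → ℝ) : Prop :=
  ContinuousOn H {x : EReal | x ≠ ⊤} ∧ ∀ x : EReal, x ≠ ⊤ → 0 ≤ H x

/-- A `λ`-exponential Hamiltonian: continuous, convex, and
`limsup_{y→∞} sup_{x ∈ [-M,M]} |H(x+y)/H(y) - e^{λx}| = 0` for every `M ∈ ℕ`. -/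
def IsLambdaExpHamiltonian (l : ℝ) (H : EReal → ℝ) : Prop :=
  IsHamiltonian H ∧
    ConvexOn ℝ Set.univ (fun x : ℝ => H (x : EReal)) ∧
    ∀ M : ℕ, Tendsto
      (fun y : ℝ => ⨆ x ∈ Icc (-(M : ℝ)) (M : ℝ), |H ((x + y : ℝ) : EReal) / H ((y : ℝ) : EReal) - Real.exp (l * x)|)
      atTop (𝓝 0)


end LineEnsembles

open LineEnsembles

/-!
The functions `x ↦ exp (-exp (x i))` are bounded, continuous and injective in `x i`, so the
algebra of polynomials in them is a point-separating algebra of bounded continuous functions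
on `ℝ^ι`, and such an algebra separates finite measures. The hypothesis only gives the integrals
of the monomials whose exponents are all positive; these are the integrals of all monomials
against the law reweighted by the density `∏ i, exp (-exp (x i))`, and since that density is
positive everywhere the reweighted law determines the law.
-/

open Real BoundedContinuousFunction

section ExpNegExp

variable {ι : Type*}

def expNegExpCoord (i : ι) : (ι → ℝ) →ᵇ ℝ :=
  .ofNormedAddCommGroup (fun x => exp (-exp (x i))) (by fun_prop) 1 fun x => by
    rw [norm_of_nonneg (exp_pos _).le, exp_le_one_iff, neg_nonpos]
    exact (exp_pos _).le

lemma expNegExpCoord_apply (i : ι) (x : ι → ℝ) : expNegExpCoord i x = exp (-exp (x i)) := rfl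

def expNegExpAlgebra : StarSubalgebra ℝ ((ι → ℝ) →ᵇ ℝ) :=
  { (MvPolynomial.aeval (expNegExpCoord (ι := ι))).range with
    star_mem' := fun {f} hf => by
      convert hf
      ext x
      exact star_trivial (f x) }

lemma expNegExpAlgebra_separatesPoints :
    ((expNegExpAlgebra (ι := ι)).map (toContinuousMapStarₐ ℝ)).SeparatesPoints := by
  intro x y hxy
  obtain ⟨i, hi⟩ := Function.ne_iff.1 hxy
  have hmem : expNegExpCoord i ∈ expNegExpAlgebra :=
    ⟨MvPolynomial.X i, MvPolynomial.aeval_X _ _⟩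
  refine ⟨_, ⟨_, ⟨_, hmem, rfl⟩, rfl⟩, ?_⟩
  simpa [expNegExpCoord_apply] using hi

variable [Fintype ι]

lemma aeval_expNegExpCoord_monomial (n : ι →₀ ℕ) (c : ℝ) (x : ι → ℝ) :
    MvPolynomial.aeval expNegExpCoord (MvPolynomial.monomial n c) x =
      c * ∏ i, exp (-(n i : ℝ) * exp (x i)) := by
  rw [MvPolynomial.aeval_monomial, Finsupp.prod_fintype _ _ fun _ => pow_zero _]
  simp [coe_prod, expNegExpCoord_apply, ← exp_nat_mul]

lemma integral_aeval_expNegExpCoord_eq {μ ν : Measure (ι → ℝ)} [IsFiniteMeasure μ]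
    [IsFiniteMeasure ν]
    (h : ∀ n : ι → ℕ, ∫ x, ∏ i, exp (-(n i : ℝ) * exp (x i)) ∂μ =
      ∫ x, ∏ i, exp (-(n i : ℝ) * exp (x i)) ∂ν)
    (p : MvPolynomial ι ℝ) :
    ∫ x, MvPolynomial.aeval expNegExpCoord p x ∂μ =
      ∫ x, MvPolynomial.aeval expNegExpCoord p x ∂ν := by
  induction p using MvPolynomial.induction_on' with
  | monomial n c => simp only [aeval_expNegExpCoord_monomial, integral_const_mul, h]
  | add p q hp hq =>
    simp only [map_add, coe_add, Pi.add_apply]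
    rw [integral_add (integrable μ _) (integrable μ _),
      integral_add (integrable ν _) (integrable ν _), hp, hq]

lemma integral_prod_exp_neg_mul_exp_withDensity (ρ : Measure (ι → ℝ)) (n : ι → ℕ) :
    ∫ x, ∏ i, exp (-(n i : ℝ) * exp (x i))
        ∂ρ.withDensity (fun x => ENNReal.ofReal (∏ i, exp (-exp (x i)))) =
      ∫ x, ∏ i, exp (-((n i + 1 : ℕ) : ℝ) * exp (x i)) ∂ρ := by
  rw [integral_withDensity_eq_integral_toReal_smul (by fun_prop)
    (ae_of_all _ fun _ => ENNReal.ofReal_lt_top)]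
  refine integral_congr_ae (ae_of_all _ fun x => ?_)
  dsimp only
  rw [ENNReal.toReal_ofReal (by positivity), smul_eq_mul, ← Finset.prod_mul_distrib]
  refine Finset.prod_congr rfl fun i _ => ?_
  rw [← exp_add]
  push_cast
  ring_nf

namespace MeasureTheory.Measure

theorem ext_of_integral_prod_exp_neg_mul_exp_eq {μ ν : Measure (ι → ℝ)} [IsFiniteMeasure μ]
    [IsFiniteMeasure ν]
    (h : ∀ n : ι → ℕ, ∫ x, ∏ i, exp (-(n i : ℝ) * exp (x i)) ∂μ =
      ∫ x, ∏ i, exp (-(n i : ℝ) * exp (x i)) ∂ν) : μ = ν := by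
  refine ext_of_forall_mem_subalgebra_integral_eq_of_polish expNegExpAlgebra_separatesPoints ?_
  rintro _ ⟨p, rfl⟩
  exact integral_aeval_expNegExpCoord_eq h p

theorem ext_of_integral_prod_exp_neg_mul_exp_eq_of_pos {μ ν : Measure (ι → ℝ)}
    [IsFiniteMeasure μ] [IsFiniteMeasure ν]
    (h : ∀ z : ι → ℕ, (∀ i, 0 < z i) → ∫ x, ∏ i, exp (-(z i : ℝ) * exp (x i)) ∂μ =
      ∫ x, ∏ i, exp (-(z i : ℝ) * exp (x i)) ∂ν) : μ = ν := by
  set d : (ι → ℝ) → ℝ≥0∞ := fun x => ENNReal.ofReal (∏ i, exp (-exp (x i)))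
  have hd_meas : Measurable d := by fun_prop
  have hd_ne_zero : ∀ x, d x ≠ 0 := fun x => by positivity
  have hd_ne_top : ∀ x, d x ≠ ∞ := fun _ => ENNReal.ofReal_ne_top
  have hd_finite (ρ : Measure (ι → ℝ)) [IsFiniteMeasure ρ] : IsFiniteMeasure (ρ.withDensity d) :=
    isFiniteMeasure_withDensity_ofReal <| by
      simpa only [coe_prod, Finset.prod_fn, expNegExpCoord_apply] using
        (integrable ρ (∏ i, expNegExpCoord i)).hasFiniteIntegral
  have h_weighted : μ.withDensity d = ν.withDensity d := by
    refine ext_of_integral_prod_exp_neg_mul_exp_eq fun n => ?_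
    rw [integral_prod_exp_neg_mul_exp_withDensity, integral_prod_exp_neg_mul_exp_withDensity]
    exact h (n + 1) fun i => Nat.succ_pos (n i)
  rw [← withDensity_inv_same hd_meas (ae_of_all μ hd_ne_zero) (ae_of_all μ hd_ne_top),
    h_weighted, withDensity_inv_same hd_meas (ae_of_all ν hd_ne_zero) (ae_of_all ν hd_ne_top)]

end MeasureTheory.Measure

end ExpNegExp

/-- STATEMENT 14 -/
theorem random_vectors_eq_of_expExp_moments
    (k : ℕ) (Ω₁ Ω₂ : Type) (m₁ : MeasurableSpace Ω₁) (m₂ : MeasurableSpace Ω₂)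
    (P₁ : MeasureTheory.Measure Ω₁) (P₂ : MeasureTheory.Measure Ω₂)
    [MeasureTheory.IsProbabilityMeasure P₁] [MeasureTheory.IsProbabilityMeasure P₂]
    (X : Ω₁ → Fin k → ℝ) (X' : Ω₂ → Fin k → ℝ) (hX : Measurable X) (hX' : Measurable X')
    (h : ∀ z : Fin k → ℕ, (∀ i, 0 < z i) →
      (∫ ω, ∏ i, Real.exp (-(z i : ℝ) * Real.exp (X ω i)) ∂P₁) =
      (∫ ω, ∏ i, Real.exp (-(z i : ℝ) * Real.exp (X' ω i)) ∂P₂)) :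
    P₁.map X = P₂.map X' := by
  refine Measure.ext_of_integral_prod_exp_neg_mul_exp_eq_of_pos fun z hz => ?_
  have h_cont : Continuous fun x : Fin k → ℝ => ∏ i, exp (-(z i : ℝ) * exp (x i)) := by fun_prop
  rw [integral_map hX.aemeasurable h_cont.aestronglyMeasurable,
    integral_map hX'.aemeasurable h_cont.aestronglyMeasurable]
  exact h z hz
end
end

section
/- For t > 0 and x, y ∈ ℝ let p(t; x, y) = exp(−(x−y)²/(2t))/√(2πt). Fix λ, M > 0. Then there exists a constant C₁ > 0, depending only on λ and M, such that for all x, y ∈ [−M, M], all n ∈ ℕ and all b_n with n^{−5/4} ≤ b_n ≤ n^{−3/4}, setting W_n = λ^{−1} log n and V_n = n^{−1/3}, one has: [∫_{−∞}^{−W_n} ∫_{−∞}^{−W_n − V_n} p(n^{−2}; x, x₁)·p(2b_n; x₁, x₂)·p(n^{−2}; x₂, y) dx₂ dx₁ + ∫_{−∞}^{−W_n − V_n} ∫_{−∞}^{−W_n} p(n^{−2}; x, x₁)·p(2b_n; x₁, x₂)·p(n^{−2}; x₂, y) dx₂ dx₁] / [∫_{−∞}^{−W_n} ∫_{−∞}^{−W_n}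 p(n^{−2}; x, x₁)·p(2b_n; x₁, x₂)·p(n^{−2}; x₂, y) dx₂ dx₁] ≤ C₁·exp(−(1/(2λ))·n^{5/3}·log n). -/
open MeasureTheory Filter Set Topology ProbabilityTheory
open scoped ENNReal NNReal

attribute [local instance] MeasureTheory.Measure.Subtype.measureSpace

noncomputable section

open LineEnsembles

/-! Bound the numerator from above by replacing the middle kernel with its maximum `(2πb)^{-1/2}`
and using the Gaussian tail bound on each half-line, and the denominator from below by the mass of
the box `[-W - s, -W]²`, where `s = n⁻²` is the outer time. The extra cut-off shift `V = n^{-1/3}`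
then costs a factor `exp (-(W - M) V / s) = exp (-(W - M) n^{5/3})`, which beats
`exp (-n^{5/3} log n / (2λ))` up to the polynomial factors `n² e^{2W}` as soon as `W ≥ 4M` and
`n ≥ 8(λ + 1)`. Below that threshold the ratio is at most `2`, as both numerator terms are dominated
by the denominator. -/

open Real

section HeatKernel

variable {t : ℝ}

lemma heatK_comm (t x y : ℝ) : heatK t x y = heatK t y x := by
  rw [heatK, heatK, ← neg_sub x y, neg_sq]

lemma heatK_nonneg (t x y : ℝ) : 0 ≤ heatK t x y := by
  unfold heatK; positivity

lemma heatK_pos (ht : 0 < t) (x y : ℝ) : 0 < heatK t x y := by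
  unfold heatK; positivity

lemma heatK_eq_gaussianPDFReal (ht : 0 < t) (x : ℝ) :
    heatK t x = gaussianPDFReal x t.toNNReal := by
  ext y
  rw [heatK, gaussianPDFReal, Real.coe_toNNReal _ ht.le, div_eq_inv_mul]

lemma integrable_heatK (ht : 0 < t) (x : ℝ) : Integrable (heatK t x) := by
  rw [heatK_eq_gaussianPDFReal ht]
  exact integrable_gaussianPDFReal _ _

lemma integral_heatK (ht : 0 < t) (x : ℝ) : ∫ y, heatK t x y = 1 := by
  rw [heatK_eq_gaussianPDFReal ht]
  exact integral_gaussianPDFReal_eq_one x (Real.toNNReal_pos.mpr ht).ne'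

lemma heatK_le (ht : 0 < t) (x y : ℝ) : heatK t x y ≤ (√(2 * π * t))⁻¹ := by
  rw [heatK, div_eq_inv_mul]
  refine mul_le_of_le_one_right (by positivity) (exp_le_one_iff.mpr ?_)
  exact div_nonpos_of_nonpos_of_nonneg (neg_nonpos.mpr (sq_nonneg _)) (by positivity)

lemma le_heatK (ht : 0 < t) {x y β : ℝ} (h : (y - x) ^ 2 ≤ β) :
    (√(2 * π * t))⁻¹ * exp (-β / (2 * t)) ≤ heatK t x y := by
  rw [heatK, div_eq_inv_mul (exp _)]
  gcongr ?_ * exp ?_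
  exact div_le_div_of_nonneg_right (neg_le_neg h) (by positivity)

/-- Gaussian tail bound, from `heatK t x z ≤ exp (-(x - c)² / (2t)) * heatK t c z` for `z ≤ c`. -/
lemma setIntegral_Iic_heatK_le (ht : 0 < t) {x c : ℝ} (hc : c ≤ x) :
    ∫ z in Iic c, heatK t x z ≤ exp (-(x - c) ^ 2 / (2 * t)) := by
  set K := exp (-(x - c) ^ 2 / (2 * t))
  have hpointwise : ∀ z ∈ Iic c, heatK t x z ≤ K * heatK t c z := fun z (hz : z ≤ c) => by
    rw [heatK, heatK, mul_div_assoc', ← exp_add, ← add_div]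
    gcongr
    nlinarith [mul_nonneg (sub_nonneg.2 hc) (sub_nonneg.2 hz)]
  calc ∫ z in Iic c, heatK t x z
      ≤ ∫ z in Iic c, K * heatK t c z :=
        setIntegral_mono_on (integrable_heatK ht x).integrableOn
          ((integrable_heatK ht c).const_mul K).integrableOn measurableSet_Iic hpointwise
    _ = K * ∫ z in Iic c, heatK t c z := integral_const_mul K _
    _ ≤ K * ∫ z, heatK t c z := mul_le_mul_of_nonneg_left
        (setIntegral_le_integral (integrable_heatK ht c) (ae_of_all _ (heatK_nonneg t c)))
        (exp_nonneg _)
    _ = K := by rw [integral_heatK ht, mul_one]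

end HeatKernel

section HeatChain

def heatChainDensity (s b x y : ℝ) (p : ℝ × ℝ) : ℝ :=
  heatK s x p.1 * heatK b p.1 p.2 * heatK s p.2 y

def heatChainIntegral (s b x y c₁ c₂ : ℝ) : ℝ :=
  ∫ x₁ in Iic c₁, ∫ x₂ in Iic c₂, heatK s x x₁ * heatK b x₁ x₂ * heatK s x₂ y

def heatChainRatio (s b x y W V : ℝ) : ℝ :=
  (heatChainIntegral s b x y (-W) (-W - V) + heatChainIntegral s b x y (-W - V) (-W)) /
    heatChainIntegral s b x y (-W) (-W)

variable {s b x y : ℝ}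

lemma heatChainDensity_nonneg (s b x y : ℝ) (p : ℝ × ℝ) : 0 ≤ heatChainDensity s b x y p :=
  mul_nonneg (mul_nonneg (heatK_nonneg _ _ _) (heatK_nonneg _ _ _)) (heatK_nonneg _ _ _)

lemma heatChainDensity_le (hb : 0 < b) (p : ℝ × ℝ) :
    heatChainDensity s b x y p ≤ (√(2 * π * b))⁻¹ * (heatK s x p.1 * heatK s y p.2) := by
  calc heatChainDensity s b x y p = heatK b p.1 p.2 * (heatK s x p.1 * heatK s y p.2) := by
        rw [heatChainDensity, heatK_comm s p.2 y]; ring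
    _ ≤ _ := mul_le_mul_of_nonneg_right (heatK_le hb _ _)
        (mul_nonneg (heatK_nonneg _ _ _) (heatK_nonneg _ _ _))

lemma integrable_heatChainDensity (hs : 0 < s) (hb : 0 < b) :
    Integrable (heatChainDensity s b x y) := by
  refine Integrable.mono' (((integrable_heatK hs x).mul_prod (integrable_heatK hs y)).const_mul
    (√(2 * π * b))⁻¹) ?_ (ae_of_all _ fun p => ?_)
  · exact Continuous.aestronglyMeasurable (by unfold heatChainDensity heatK; fun_prop)
  · rw [Real.norm_of_nonneg (heatChainDensity_nonneg s b x y p)]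
    exact heatChainDensity_le hb p

lemma heatChainIntegral_eq_setIntegral (hs : 0 < s) (hb : 0 < b) (c₁ c₂ : ℝ) :
    heatChainIntegral s b x y c₁ c₂ = ∫ p in Iic c₁ ×ˢ Iic c₂, heatChainDensity s b x y p := by
  rw [Measure.volume_eq_prod, setIntegral_prod _ (integrable_heatChainDensity hs hb).integrableOn]
  rfl

lemma heatChainIntegral_pos (hs : 0 < s) (hb : 0 < b) (c₁ c₂ : ℝ) :
    0 < heatChainIntegral s b x y c₁ c₂ := by
  rw [heatChainIntegral_eq_setIntegral hs hb, setIntegral_pos_iff_support_of_nonneg_ae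
    (ae_of_all _ (heatChainDensity_nonneg s b x y)) (integrable_heatChainDensity hs hb).integrableOn]
  have hsupp : Function.support (heatChainDensity s b x y) = univ :=
    eq_univ_of_forall fun p => Function.mem_support.mpr
      (mul_pos (mul_pos (heatK_pos hs _ _) (heatK_pos hb _ _)) (heatK_pos hs _ _)).ne'
  rw [hsupp, univ_inter, Measure.volume_eq_prod, Measure.prod_prod]
  simp

lemma heatChainIntegral_mono (hs : 0 < s) (hb : 0 < b) {c₁ c₂ d₁ d₂ : ℝ} (h₁ : c₁ ≤ d₁)
    (h₂ : c₂ ≤ d₂) : heatChainIntegral s b x y c₁ c₂ ≤ heatChainIntegral s b x y d₁ d₂ := by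
  rw [heatChainIntegral_eq_setIntegral hs hb, heatChainIntegral_eq_setIntegral hs hb]
  exact setIntegral_mono_set (integrable_heatChainDensity hs hb).integrableOn
    (ae_of_all _ (heatChainDensity_nonneg s b x y))
    (Set.prod_mono (Iic_subset_Iic.mpr h₁) (Iic_subset_Iic.mpr h₂)).eventuallyLE

lemma heatChainIntegral_le (hs : 0 < s) (hb : 0 < b) {c₁ c₂ : ℝ} (h₁ : c₁ ≤ x) (h₂ : c₂ ≤ y) :
    heatChainIntegral s b x y c₁ c₂ ≤
      (√(2 * π * b))⁻¹ * (exp (-(x - c₁) ^ 2 / (2 * s)) * exp (-(y - c₂) ^ 2 / (2 * s))) := by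
  have hprod := (integrable_heatK hs x).mul_prod (integrable_heatK hs y)
  calc heatChainIntegral s b x y c₁ c₂
      ≤ ∫ p in Iic c₁ ×ˢ Iic c₂, (√(2 * π * b))⁻¹ * (heatK s x p.1 * heatK s y p.2) := by
        rw [heatChainIntegral_eq_setIntegral hs hb]
        exact setIntegral_mono (integrable_heatChainDensity hs hb).integrableOn
          (hprod.const_mul _).integrableOn (heatChainDensity_le hb)
    _ = (√(2 * π * b))⁻¹ * ((∫ z in Iic c₁, heatK s x z) * ∫ z in Iic c₂, heatK s y z) := by
        rw [integral_const_mul, Measure.volume_eq_prod, setIntegral_prod_mul]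
    _ ≤ _ := mul_le_mul_of_nonneg_left (mul_le_mul (setIntegral_Iic_heatK_le hs h₁)
        (setIntegral_Iic_heatK_le hs h₂) (setIntegral_nonneg measurableSet_Iic
          fun z _ => heatK_nonneg s y z) (exp_nonneg _)) (by positivity)

lemma le_heatChainIntegral (hs : 0 < s) (hb : 0 < b) {c δ : ℝ} (hδ : 0 ≤ δ) (hx : c ≤ x)
    (hy : c ≤ y) :
    δ ^ 2 * ((√(2 * π * s))⁻¹ * exp (-(x - c + δ) ^ 2 / (2 * s)) *
        ((√(2 * π * b))⁻¹ * exp (-δ ^ 2 / (2 * b))) *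
        ((√(2 * π * s))⁻¹ * exp (-(y - c + δ) ^ 2 / (2 * s)))) ≤
      heatChainIntegral s b x y c c := by
  have hbox : ∀ p ∈ Icc (c - δ) c ×ˢ Icc (c - δ) c,
      (√(2 * π * s))⁻¹ * exp (-(x - c + δ) ^ 2 / (2 * s)) *
        ((√(2 * π * b))⁻¹ * exp (-δ ^ 2 / (2 * b))) *
        ((√(2 * π * s))⁻¹ * exp (-(y - c + δ) ^ 2 / (2 * s))) ≤ heatChainDensity s b x y p := by
    rintro ⟨z₁, z₂⟩ ⟨⟨h₁, h₁'⟩, ⟨h₂, h₂'⟩⟩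
    rw [heatChainDensity, heatK_comm s z₂ y]
    refine mul_le_mul (mul_le_mul (le_heatK hs ?_) (le_heatK hb ?_) (by positivity)
      (heatK_nonneg _ _ _)) (le_heatK hs ?_) (by positivity)
      (mul_nonneg (heatK_nonneg _ _ _) (heatK_nonneg _ _ _)) <;> nlinarith
  have hvol : volume.real (Icc (c - δ) c ×ˢ Icc (c - δ) c) = δ ^ 2 := by
    rw [measureReal_def, Measure.volume_eq_prod, Measure.prod_prod]
    simp [hδ, sq]
  calc _ = volume.real (Icc (c - δ) c ×ˢ Icc (c - δ) c) • _ := by rw [hvol, smul_eq_mul]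
    _ ≤ ∫ p in Icc (c - δ) c ×ˢ Icc (c - δ) c, heatChainDensity s b x y p :=
        setIntegral_ge_of_const_le (measurableSet_Icc.prod measurableSet_Icc)
          (isCompact_Icc.prod isCompact_Icc).measure_ne_top hbox
          (integrable_heatChainDensity hs hb).integrableOn
    _ ≤ ∫ p in Iic c ×ˢ Iic c, heatChainDensity s b x y p :=
        setIntegral_mono_set (integrable_heatChainDensity hs hb).integrableOn
          (ae_of_all _ (heatChainDensity_nonneg s b x y))
          (Set.prod_mono Icc_subset_Iic_self Icc_subset_Iic_self).eventuallyLE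
    _ = heatChainIntegral s b x y c c := (heatChainIntegral_eq_setIntegral hs hb c c).symm

lemma heatChainRatio_le_two (hs : 0 < s) (hb : 0 < b) {W V : ℝ} (hV : 0 ≤ V) :
    heatChainRatio s b x y W V ≤ 2 := by
  have hWV : -W - V ≤ -W := by linarith
  rw [heatChainRatio, div_le_iff₀ (heatChainIntegral_pos hs hb _ _)]
  linarith [heatChainIntegral_mono (x := x) (y := y) hs hb (le_refl (-W)) hWV,
    heatChainIntegral_mono (x := x) (y := y) hs hb hWV (le_refl (-W))]

/-- `heatChainIntegral_le` against `le_heatChainIntegral` with `δ = s`; the prefactor `2π / s`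
is `(s² · (2πs)⁻¹)⁻¹`. -/
lemma heatChainIntegral_le_mul (hs : 0 < s) (hb : 0 < b) {c c₁ c₂ : ℝ} (h₁ : c₁ ≤ x)
    (h₂ : c₂ ≤ y) (hx : c ≤ x) (hy : c ≤ y) :
    heatChainIntegral s b x y c₁ c₂ ≤ 2 * π / s * exp (s ^ 2 / (2 * b) +
        ((x - c + s) ^ 2 - (x - c₁) ^ 2 + (y - c + s) ^ 2 - (y - c₂) ^ 2) / (2 * s)) *
      heatChainIntegral s b x y c c := by
  refine (heatChainIntegral_le hs hb h₁ h₂).trans (le_of_eq_of_le ?_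
    (mul_le_mul_of_nonneg_left (le_heatChainIntegral hs hb hs.le hx hy) (by positivity)))
  have hnorm : 2 * π / s * (s ^ 2 * ((√(2 * π * s))⁻¹ * (√(2 * π * s))⁻¹)) = 1 := by
    rw [← mul_inv, mul_self_sqrt (by positivity)]
    field_simp
  calc (√(2 * π * b))⁻¹ * (exp (-(x - c₁) ^ 2 / (2 * s)) * exp (-(y - c₂) ^ 2 / (2 * s)))
      = 2 * π / s * (s ^ 2 * ((√(2 * π * s))⁻¹ * (√(2 * π * s))⁻¹)) * (√(2 * π * b))⁻¹ *
          exp (-(x - c₁) ^ 2 / (2 * s) + -(y - c₂) ^ 2 / (2 * s)) := by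
        rw [hnorm, exp_add, one_mul]
    _ = _ := by
        rw [show -(x - c₁) ^ 2 / (2 * s) + -(y - c₂) ^ 2 / (2 * s) =
          s ^ 2 / (2 * b) + ((x - c + s) ^ 2 - (x - c₁) ^ 2 + (y - c + s) ^ 2 - (y - c₂) ^ 2) / (2 * s)
            + -(x - c + s) ^ 2 / (2 * s) + -s ^ 2 / (2 * b) + -(y - c + s) ^ 2 / (2 * s) by ring]
        simp only [exp_add]
        ring

lemma heatChainRatio_le (hs : 0 < s) (hb : 0 < b) {M W V : ℝ} (hV : 0 ≤ V)
    (hx : x ∈ Icc (-M) M) (hy : y ∈ Icc (-M) M) (hMW : M ≤ W) :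
    heatChainRatio s b x y W V ≤
      4 * π / s * exp (s ^ 2 / (2 * b) + (s + 2 * (W + M) - (W - M) * V / s)) := by
  obtain ⟨hx₁, hx₂⟩ := hx
  obtain ⟨hy₁, hy₂⟩ := hy
  have hexp : ∀ u v, u ≤ W + M → W - M ≤ v → v ≤ W + M →
      ((u + s) ^ 2 - u ^ 2 + (v + s) ^ 2 - (v + V) ^ 2) / (2 * s) ≤
        s + 2 * (W + M) - (W - M) * V / s := by
    intro u v hu hv hv'
    calc _ ≤ (2 * s ^ 2 + 4 * s * (W + M) - 2 * (W - M) * V) / (2 * s) := by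
          refine div_le_div_of_nonneg_right ?_ (by positivity)
          nlinarith [mul_nonneg hV (sub_nonneg.2 hv)]
      _ = _ := by field_simp; ring
  set K := 2 * π / s * exp (s ^ 2 / (2 * b) + (s + 2 * (W + M) - (W - M) * V / s)) with hK
  have hD := heatChainIntegral_pos (x := x) (y := y) hs hb (-W) (-W)
  have hA : heatChainIntegral s b x y (-W) (-W - V) ≤ K * heatChainIntegral s b x y (-W) (-W) := by
    refine (heatChainIntegral_le_mul (c := -W) hs hb (by linarith) (by linarith) (by linarith)
      (by linarith)).trans ?_
    rw [hK]
    gcongr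
    refine Eq.trans_le ?_ (hexp (x + W) (y + W) (by linarith) (by linarith) (by linarith))
    ring
  have hB : heatChainIntegral s b x y (-W - V) (-W) ≤ K * heatChainIntegral s b x y (-W) (-W) := by
    refine (heatChainIntegral_le_mul (c := -W) hs hb (by linarith) (by linarith) (by linarith)
      (by linarith)).trans ?_
    rw [hK]
    gcongr
    refine Eq.trans_le ?_ (hexp (y + W) (x + W) (by linarith) (by linarith) (by linarith))
    ring
  rw [heatChainRatio, div_le_iff₀ hD, show 4 * π / s = 2 * (2 * π / s) by ring, mul_assoc 2]
  linarith

end HeatChain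

section Asymptotics

variable {l : ℝ} {n : ℕ} {bn : ℝ}

lemma heatChain_exponent_le (hl : 0 ≤ l) {M W ν r s : ℝ} (hM : 0 ≤ M) (hW : 4 * M ≤ W)
    (hν : 8 * (l + 1) ≤ ν) (hr : r ≤ 1) (hs : s ≤ 1) :
    2 * (l * W) + (r + (s + 2 * (W + M) - (W - M) * ν)) ≤ 2 * M + 2 + -(ν * W / 2) := by
  nlinarith [mul_le_mul_of_nonneg_right hν (hM.trans (by linarith) : 0 ≤ W),
    mul_le_mul_of_nonneg_left hW (by linarith : 0 ≤ ν)]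

lemma heatChainRatio_le_of_large (hl : 0 < l) {M x y : ℝ} (hx : x ∈ Icc (-M) M)
    (hy : y ∈ Icc (-M) M) (hMn : exp (4 * l * M) ≤ n) (hln : 8 * (l + 1) ≤ n)
    (hbn : (n : ℝ) ^ (-(5 : ℝ) / 4) ≤ bn) :
    heatChainRatio ((n : ℝ) ^ (-(2 : ℝ))) (2 * bn) x y (log n / l) ((n : ℝ) ^ (-(1 : ℝ) / 3)) ≤
      4 * π * exp (2 * M + 2) * exp (-(1 / (2 * l)) * (n : ℝ) ^ ((5 : ℝ) / 3) * log n) := by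
  have hn0 : (0 : ℝ) < n := (exp_pos _).trans_le hMn
  have hn1 : (1 : ℝ) ≤ n := by linarith
  have hM : 0 ≤ M := by linarith [hx.1, hx.2]
  set s := (n : ℝ) ^ (-(2 : ℝ)) with hs_def
  set W := log n / l
  set ν := (n : ℝ) ^ ((5 : ℝ) / 3)
  have hs : 0 < s := rpow_pos_of_pos hn0 _
  have hs1 : s ≤ 1 := rpow_le_one_of_one_le_of_nonpos hn1 (by norm_num)
  have hlog : log n = l * W := (mul_div_cancel₀ _ hl.ne').symm
  have hW : 4 * M ≤ W := by
    rw [le_div_iff₀ hl]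
    linarith [(le_log_iff_exp_le hn0).2 hMn]
  have hν : (n : ℝ) ≤ ν := self_le_rpow_of_one_le hn1 (by norm_num)
  have hVs : (n : ℝ) ^ (-(1 : ℝ) / 3) / s = ν := by
    rw [← rpow_sub hn0]
    norm_num
    rfl
  have hbn0 : 0 < bn := (rpow_pos_of_pos hn0 _).trans_le hbn
  have hsb : s ^ 2 / (2 * (2 * bn)) ≤ 1 := by
    have hs2 : s ^ 2 ≤ bn := calc
      s ^ 2 = (n : ℝ) ^ (-(4 : ℝ)) := by rw [← rpow_natCast, ← rpow_mul hn0.le]; norm_num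
      _ ≤ (n : ℝ) ^ (-(5 : ℝ) / 4) := rpow_le_rpow_of_exponent_le hn1 (by norm_num)
      _ ≤ bn := hbn
    rw [div_le_one (by positivity)]
    linarith
  have hinv : 4 * π / s = 4 * π * exp (2 * (l * W)) := by
    rw [hs_def, rpow_def_of_pos hn0, hlog, div_eq_mul_inv, ← exp_neg]
    ring_nf
  have hexponent : -(1 / (2 * l)) * ν * log n = -(ν * W / 2) := by
    rw [hlog]
    field_simp
  calc heatChainRatio s (2 * bn) x y W ((n : ℝ) ^ (-(1 : ℝ) / 3))
      ≤ 4 * π / s * exp (s ^ 2 / (2 * (2 * bn)) +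
          (s + 2 * (W + M) - (W - M) * (n : ℝ) ^ (-(1 : ℝ) / 3) / s)) :=
        heatChainRatio_le hs (by positivity) (rpow_nonneg hn0.le _) hx hy (by linarith)
    _ = 4 * π * exp (2 * (l * W) + (s ^ 2 / (2 * (2 * bn)) + (s + 2 * (W + M) - (W - M) * ν))) := by
        rw [hinv, mul_div_assoc, hVs, mul_assoc, ← exp_add]
    _ ≤ 4 * π * exp (2 * M + 2 + -(1 / (2 * l)) * ν * log n) := by
        gcongr 4 * π * exp ?_
        rw [hexponent]
        exact heatChain_exponent_le hl.le hM hW (hln.trans hν) hsb hs1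
    _ = _ := by rw [exp_add]; ring

lemma heatChainRatio_le_of_small (hl : 0 < l) {x y N : ℝ} (hn : 1 ≤ n) (hnN : n ≤ N)
    (hbn : (n : ℝ) ^ (-(5 : ℝ) / 4) ≤ bn) :
    heatChainRatio ((n : ℝ) ^ (-(2 : ℝ))) (2 * bn) x y (log n / l) ((n : ℝ) ^ (-(1 : ℝ) / 3)) ≤
      2 * exp (N ^ 3 / (2 * l)) * exp (-(1 / (2 * l)) * (n : ℝ) ^ ((5 : ℝ) / 3) * log n) := by
  have hn1 : (1 : ℝ) ≤ n := by exact_mod_cast hn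
  have hn0 : (0 : ℝ) < n := by linarith
  have hbn0 : 0 < bn := (rpow_pos_of_pos hn0 _).trans_le hbn
  refine (heatChainRatio_le_two (rpow_pos_of_pos hn0 _) (by positivity)
    (rpow_nonneg hn0.le _)).trans ?_
  have hgrowth : (n : ℝ) ^ ((5 : ℝ) / 3) * log n ≤ N ^ 3 := calc
    (n : ℝ) ^ ((5 : ℝ) / 3) * log n ≤ (n : ℝ) ^ (2 : ℝ) * n :=
      mul_le_mul (rpow_le_rpow_of_exponent_le hn1 (by norm_num)) (log_le_self hn0.le)
        (log_nonneg hn1) (by positivity)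
    _ = (n : ℝ) ^ 3 := by rw [rpow_two]; ring
    _ ≤ N ^ 3 := pow_le_pow_left₀ hn0.le hnN 3
  rw [mul_assoc, ← exp_add]
  refine le_mul_of_one_le_right zero_le_two (one_le_exp ?_)
  rw [show N ^ 3 / (2 * l) + -(1 / (2 * l)) * (n : ℝ) ^ ((5 : ℝ) / 3) * log n =
    (N ^ 3 - (n : ℝ) ^ ((5 : ℝ) / 3) * log n) / (2 * l) by ring]
  exact div_nonneg (by linarith) (by positivity)

end Asymptotics

theorem gaussian_tail_ratio_estimate_general
    (l M : ℝ) (hl : 0 < l) :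
    ∃ C₁ : ℝ, 0 < C₁ ∧
      ∀ x ∈ Set.Icc (-M) M, ∀ y ∈ Set.Icc (-M) M,
      ∀ n : ℕ, 1 ≤ n →
      ∀ bn : ℝ, (n : ℝ) ^ (-(5 : ℝ)/4) ≤ bn → bn ≤ (n : ℝ) ^ (-(3 : ℝ)/4) →
      ∀ Wn : ℝ, Wn = Real.log n / l →
      ∀ Vn : ℝ, Vn = (n : ℝ) ^ (-(1 : ℝ)/3) →
      ((∫ x₁ in Set.Iic (-Wn), ∫ x₂ in Set.Iic (-Wn - Vn),
          heatK ((n : ℝ) ^ (-(2 : ℝ))) x x₁ * heatK (2 * bn) x₁ x₂ *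
            heatK ((n : ℝ) ^ (-(2 : ℝ))) x₂ y) +
        (∫ x₁ in Set.Iic (-Wn - Vn), ∫ x₂ in Set.Iic (-Wn),
          heatK ((n : ℝ) ^ (-(2 : ℝ))) x x₁ * heatK (2 * bn) x₁ x₂ *
            heatK ((n : ℝ) ^ (-(2 : ℝ))) x₂ y)) /
        (∫ x₁ in Set.Iic (-Wn), ∫ x₂ in Set.Iic (-Wn),
          heatK ((n : ℝ) ^ (-(2 : ℝ))) x x₁ * heatK (2 * bn) x₁ x₂ *
            heatK ((n : ℝ) ^ (-(2 : ℝ))) x₂ y) ≤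
      C₁ * Real.exp (-(1 / (2 * l)) * (n : ℝ) ^ ((5 : ℝ)/3) * Real.log n) := by
  set N := max (exp (4 * l * M)) (8 * (l + 1))
  refine ⟨4 * π * exp (2 * M + 2) + 2 * exp (N ^ 3 / (2 * l)), by positivity, ?_⟩
  rintro x hx y hy n hn bn hbn - Wn rfl Vn rfl
  change heatChainRatio _ (2 * bn) x y _ _ ≤ _
  rcases le_total N n with hNn | hnN
  · refine (heatChainRatio_le_of_large hl hx hy (le_of_max_le_left hNn)
      (le_of_max_le_right hNn) hbn).trans ?_
    gcongr
    exact le_add_of_nonneg_right (by positivity)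
  · refine (heatChainRatio_le_of_small hl hn hnN hbn).trans ?_
    gcongr
    exact le_add_of_nonneg_left (by positivity)

/-- STATEMENT 15 -/
theorem gaussian_tail_ratio_estimate
    (l M : ℝ) (hl : 0 < l) (hM : 0 < M) :
    ∃ C₁ : ℝ, 0 < C₁ ∧
      ∀ x ∈ Set.Icc (-M) M, ∀ y ∈ Set.Icc (-M) M,
      ∀ n : ℕ, 1 ≤ n →
      ∀ bn : ℝ, (n : ℝ) ^ (-(5 : ℝ)/4) ≤ bn → bn ≤ (n : ℝ) ^ (-(3 : ℝ)/4) →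
      ∀ Wn : ℝ, Wn = Real.log n / l →
      ∀ Vn : ℝ, Vn = (n : ℝ) ^ (-(1 : ℝ)/3) →
      ((∫ x₁ in Set.Iic (-Wn), ∫ x₂ in Set.Iic (-Wn - Vn),
          heatK ((n : ℝ) ^ (-(2 : ℝ))) x x₁ * heatK (2 * bn) x₁ x₂ *
            heatK ((n : ℝ) ^ (-(2 : ℝ))) x₂ y) +
        (∫ x₁ in Set.Iic (-Wn - Vn), ∫ x₂ in Set.Iic (-Wn),
          heatK ((n : ℝ) ^ (-(2 : ℝ))) x x₁ * heatK (2 * bn) x₁ x₂ *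
            heatK ((n : ℝ) ^ (-(2 : ℝ))) x₂ y)) /
        (∫ x₁ in Set.Iic (-Wn), ∫ x₂ in Set.Iic (-Wn),
          heatK ((n : ℝ) ^ (-(2 : ℝ))) x x₁ * heatK (2 * bn) x₁ x₂ *
            heatK ((n : ℝ) ^ (-(2 : ℝ))) x₂ y) ≤
      C₁ * Real.exp (-(1 / (2 * l)) * (n : ℝ) ^ ((5 : ℝ)/3) * Real.log n) :=
  gaussian_tail_ratio_estimate_general l M hl
end
end

section
/- Fix λ > 0, a λ-exponential Hamiltonian H, M > 0, β > 0 and ε₁, ε₂ ∈ (0,1). Then there exists W₁ ∈ ℕ, depending only on λ, H, M, β, ε₁, such that for every integer w ≥ W₁ the following holds. Set A_w = λ^{−1} log w and V_w = w^{−1/3}; let t ∈ ℝ and set c_w = t − β/H(A_w), d_w = t + β/H(A_w), a_w = c_w − w^{−2}, b_w = d_w + w^{−2}. Then for every pair of continuous functions g, Q: [a_w, b_w] → ℝ satisfying: sup_{u∈[a_w,b_w]} |g(u)| ≤ M; |g(u) − g(t)| ≤ ε₂ for all u ∈ [a_w, b_w]; −A_w − 1 ≤ Q(u) ≤ M + 1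 for all u ∈ [a_w, c_w] ∪ [d_w, b_w]; and −A_w − 2V_w ≤ Q(u) ≤ −A_w + 2V_w for all u ∈ [c_w, d_w], one has exp(−ε₁·(1 + 2β) − 2β·(1 + ε₁)·e^{λ·ε₂}·exp(λ·g(t))) ≤ exp(−∫_{a_w}^{b_w} H(g(u) − Q(u)) du) ≤ exp(2β·ε₁ − 2β·(1 − ε₁)·e^{−λ·ε₂}·exp(λ·g(t))). -/
open MeasureTheory Filter Set Topology ProbabilityTheory
open scoped ENNReal NNReal

attribute [local instance] MeasureTheory.Measure.Subtype.measureSpace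

noncomputable section

open LineEnsembles

/-!
Split `[a_w, b_w]` into the window `[c_w, d_w]` and two stubs of length `w⁻²`. On the window,
`g - Q = A_w + x` with `x` within `ε₂ + 2 V_w` of `g t`, and the λ-exponential asymptotics give
`H (A_w + x) ≈ H A_w · e^{λx}`; since the window has length `2β / H A_w`, it contributes
`≈ 2β e^{λ g(t) ± λ ε₂}`. On the stubs, convexity bounds `H (g - Q)` by
`H (-(2M+1)) + H (A_w + M + 1)`, and `H y = o(e^{2λy})` (iterate `H (y+1) ≤ e^{κ} H y` for
some `κ ∈ (λ, 2λ)`) makes this `o(w²)`, so the stubs contribute `o(1)`.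
-/

open Real

theorem exists_le_mul_exp_of_add_one_le_exp_mul {F : ℝ → ℝ} {κ Y : ℝ} (hκ : 0 ≤ κ)
    (hbdd : BddAbove (F '' Icc Y (Y + 1))) (hstep : ∀ y, Y ≤ y → F (y + 1) ≤ exp κ * F y) :
    ∃ C, ∀ y, Y ≤ y → F y ≤ C * exp (κ * y) := by
  obtain ⟨B, hB⟩ := hbdd
  have base : ∀ y ∈ Icc Y (Y + 1), F y ≤ max B 0 * exp (κ * (y - Y)) := fun y hy =>
    calc F y ≤ max B 0 := (hB ⟨y, hy, rfl⟩).trans (le_max_left _ _)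
      _ ≤ max B 0 * exp (κ * (y - Y)) :=
        le_mul_of_one_le_right (le_max_right _ _) (one_le_exp (by nlinarith [hy.1]))
  have key : ∀ n : ℕ, ∀ y ∈ Icc Y (Y + n + 1), F y ≤ max B 0 * exp (κ * (y - Y)) := by
    intro n
    induction n with
    | zero => simpa using base
    | succ n ih =>
      intro y hy
      rcases le_or_gt y (Y + 1) with h | h
      · exact base y ⟨hy.1, h⟩
      · have hy' : y - 1 ∈ Icc Y (Y + n + 1) := ⟨by linarith, by push_cast at hy; linarith [hy.2]⟩
        calc F y = F (y - 1 + 1) := by ring_nf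
          _ ≤ exp κ * F (y - 1) := hstep _ hy'.1
          _ ≤ exp κ * (max B 0 * exp (κ * (y - 1 - Y))) := by gcongr; exact ih _ hy'
          _ = max B 0 * exp (κ * (y - Y)) := by rw [mul_left_comm, ← exp_add]; ring_nf
  refine ⟨max B 0 * exp (-(κ * Y)), fun y hy => ?_⟩
  calc F y ≤ max B 0 * exp (κ * (y - Y)) :=
        key ⌈y - Y⌉₊ y ⟨hy, by linarith [Nat.le_ceil (y - Y)]⟩
    _ = max B 0 * exp (-(κ * Y)) * exp (κ * y) := by rw [mul_assoc, ← exp_add]; ring_nf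

theorem intervalIntegral_mem_Icc_of_mem_Icc {f : ℝ → ℝ} {a b m₁ m₂ : ℝ} (hab : a ≤ b)
    (hf : ContinuousOn f (Icc a b)) (hm : ∀ u ∈ Icc a b, f u ∈ Icc m₁ m₂) :
    ∫ u in a..b, f u ∈ Icc ((b - a) * m₁) ((b - a) * m₂) := by
  have hfi := hf.intervalIntegrable_of_Icc (μ := volume) hab
  constructor
  · simpa using intervalIntegral.integral_mono_on hab intervalIntegrable_const hfi
      fun u hu => (hm u hu).1
  · simpa using intervalIntegral.integral_mono_on hab hfi intervalIntegrable_const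
      fun u hu => (hm u hu).2

theorem setIntegral_Icc_eq_add_add {f : ℝ → ℝ} {a b c d : ℝ} (hab : a ≤ b) (hbc : b ≤ c)
    (hcd : c ≤ d) (hf : ContinuousOn f (Icc a d)) :
    ∫ u in Icc a d, f u = (∫ u in a..b, f u) + (∫ u in b..c, f u) + ∫ u in c..d, f u := by
  have hi : ∀ p q, a ≤ p → p ≤ q → q ≤ d → IntervalIntegrable f volume p q := fun p q hp hpq hq =>
    (hf.mono (Icc_subset_Icc hp hq)).intervalIntegrable_of_Icc hpq
  rw [integral_Icc_eq_integral_Ioc, ← intervalIntegral.integral_of_le (by linarith),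
    intervalIntegral.integral_add_adjacent_intervals (hi a b le_rfl hab (by linarith))
      (hi b c hab hbc hcd),
    intervalIntegral.integral_add_adjacent_intervals (hi a c le_rfl (by linarith) hcd)
      (hi c d (by linarith) hcd le_rfl)]

theorem exp_mul_mem_Icc_of_abs_sub_le {l x x₀ η ρ ε : ℝ} (hl : 0 ≤ l) (hx : |x - x₀| ≤ η + ρ)
    (hρ_up : exp (l * ρ) ≤ 1 + ε) (hρ_lo : 1 - ε ≤ exp (-(l * ρ))) :
    exp (l * x) ∈ Icc ((1 - ε) * exp (-(l * η)) * exp (l * x₀))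
      ((1 + ε) * exp (l * η) * exp (l * x₀)) := by
  obtain ⟨hx₁, hx₂⟩ := abs_le.1 hx
  constructor
  · calc (1 - ε) * exp (-(l * η)) * exp (l * x₀)
        ≤ exp (-(l * ρ)) * exp (-(l * η)) * exp (l * x₀) := by gcongr
      _ = exp (l * (x₀ - η - ρ)) := by rw [← exp_add, ← exp_add]; ring_nf
      _ ≤ exp (l * x) := by gcongr; linarith
  · calc exp (l * x) ≤ exp (l * (x₀ + η + ρ)) := by gcongr; linarith
      _ = exp (l * ρ) * exp (l * η) * exp (l * x₀) := by rw [← exp_add, ← exp_add]; ring_nf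
      _ ≤ (1 + ε) * exp (l * η) * exp (l * x₀) := by gcongr

namespace LineEnsembles.IsLambdaExpHamiltonian

variable {l : ℝ} {H : EReal → ℝ}

theorem continuous_coe (hH : IsLambdaExpHamiltonian l H) : Continuous fun x : ℝ => H x :=
  hH.1.1.comp_continuous continuous_coe_real_ereal EReal.coe_ne_top

theorem nonneg (hH : IsLambdaExpHamiltonian l H) (x : ℝ) : 0 ≤ H x :=
  hH.1.2 x (EReal.coe_ne_top x)

theorem eventually_abs_div_sub_exp_lt (hH : IsLambdaExpHamiltonian l H) (R : ℝ) {δ : ℝ}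
    (hδ : 0 < δ) :
    ∀ᶠ y : ℝ in atTop, ∀ x, |x| ≤ R → |H ↑(x + y) / H y - exp (l * x)| < δ := by
  filter_upwards [Metric.tendsto_nhds.1 (hH.2.2 ⌈R⌉₊) δ hδ] with y hy x hx
  rw [Real.dist_eq, sub_zero] at hy
  set φ := fun x : ℝ => |H ↑(x + y) / H y - exp (l * x)|
  have hφ : Continuous φ :=
    (((hH.continuous_coe.comp (continuous_add_const y)).div_const _).sub
      (continuous_exp.comp (continuous_const_mul l))).abs
  have hbdd : BddAbove (⋃ x, range fun (_ : x ∈ Icc (-(⌈R⌉₊ : ℝ)) ⌈R⌉₊) => φ x) :=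
    ((isCompact_Icc.image hφ).bddAbove).mono <| iUnion_subset fun x =>
      range_subset_iff.2 fun hx => mem_image_of_mem φ hx
  have hxR : x ∈ Icc (-(⌈R⌉₊ : ℝ)) ⌈R⌉₊ := abs_le.1 (hx.trans (Nat.le_ceil R))
  exact (le_ciSup₂ (f := fun x (_ : x ∈ Icc (-(⌈R⌉₊ : ℝ)) ⌈R⌉₊) => φ x) hbdd x hxR).trans_lt
    (lt_of_le_of_lt (le_abs_self _) hy)

theorem eventually_pos (hH : IsLambdaExpHamiltonian l H) : ∀ᶠ y : ℝ in atTop, 0 < H y := by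
  filter_upwards [hH.eventually_abs_div_sub_exp_lt 0 one_pos] with y hy
  refine (hH.nonneg y).lt_of_ne fun h0 => ?_
  simpa [← h0] using hy 0 (by simp)

theorem eventually_mem_Icc (hH : IsLambdaExpHamiltonian l H) (R : ℝ) {δ : ℝ} (hδ : 0 < δ) :
    ∀ᶠ y : ℝ in atTop, ∀ x, |x| ≤ R →
      H ↑(x + y) ∈ Icc (H y * (exp (l * x) - δ)) (H y * (exp (l * x) + δ)) := by
  filter_upwards [hH.eventually_abs_div_sub_exp_lt R hδ, hH.eventually_pos] with y hy hpos x hx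
  obtain ⟨h₁, h₂⟩ := abs_sub_lt_iff.1 (hy x hx)
  constructor
  · rw [← le_div_iff₀' hpos]; linarith
  · rw [← div_le_iff₀' hpos]; linarith

theorem isLittleO_exp_mul (hH : IsLambdaExpHamiltonian l H) (hl : 0 ≤ l) {κ : ℝ} (hκ : l < κ) :
    (fun y : ℝ => H y) =o[atTop] fun y => exp (κ * y) := by
  obtain ⟨κ', hlκ', hκ'κ⟩ := exists_between hκ
  have hexp : 0 < exp κ' - exp l := sub_pos.2 (exp_lt_exp.2 hlκ')
  obtain ⟨Y, hY⟩ := eventually_atTop.1 (hH.eventually_mem_Icc 1 hexp)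
  have hstep : ∀ y, Y ≤ y → H ↑(y + 1) ≤ exp κ' * H y := fun y hy => by
    have h := (hY y hy 1 (by simp)).2
    rwa [add_comm, mul_one, add_sub_cancel, mul_comm] at h
  obtain ⟨C, hC⟩ := exists_le_mul_exp_of_add_one_le_exp_mul (by linarith)
    ((isCompact_Icc.image hH.continuous_coe).bddAbove) hstep
  have hO : (fun y : ℝ => H y) =O[atTop] fun y => exp (κ' * y) := by
    refine Asymptotics.IsBigO.of_bound C ?_
    filter_upwards [eventually_ge_atTop Y] with y hy
    rw [Real.norm_of_nonneg (hH.nonneg y), Real.norm_of_nonneg (exp_pos _).le]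
    exact hC y hy
  refine hO.trans_isLittleO (isLittleO_exp_comp_exp_comp.2 ?_)
  simpa [← sub_mul] using tendsto_id.const_mul_atTop (sub_pos.2 hκ'κ)

theorem tendsto_rpow_neg_two_mul (hH : IsLambdaExpHamiltonian l H) (hl : 0 < l) (C R : ℝ) :
    Tendsto (fun w : ℕ => (w : ℝ) ^ (-(2 : ℝ)) * (C + H ↑(log w / l + R))) atTop (𝓝 0) := by
  have hy : Tendsto (fun w : ℕ => log w / l + R) atTop atTop :=
    tendsto_atTop_add_const_right _ R <|
      (tendsto_log_atTop.comp tendsto_natCast_atTop_atTop).atTop_div_const hl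
  have hw : Tendsto (fun w : ℕ => (w : ℝ) ^ (-(2 : ℝ))) atTop (𝓝 0) :=
    (tendsto_rpow_neg_atTop two_pos).comp tendsto_natCast_atTop_atTop
  -- `w⁻² = e^{2lR} / e^{2ly}` for `y = log w / l + R`, so this is `H = o(e^{2ly})`
  have hH' : Tendsto (fun w : ℕ => (w : ℝ) ^ (-(2 : ℝ)) * H ↑(log w / l + R)) atTop (𝓝 0) := by
    have h := (((hH.isLittleO_exp_mul hl.le (by linarith : l < 2 * l)).tendsto_div_nhds_zero).comp
      hy).const_mul (exp (2 * l * R))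
    rw [mul_zero] at h
    refine h.congr' ?_
    filter_upwards [eventually_gt_atTop 0] with w hw
    have hw' : (0 : ℝ) < w := Nat.cast_pos.2 hw
    rw [Function.comp_apply, rpow_def_of_pos hw',
      show 2 * l * (log w / l + R) = log w * 2 + 2 * l * R by field_simp, exp_add,
      show log w * -2 = -(log w * 2) by ring, exp_neg]
    field_simp
  simpa [mul_add] using (hw.mul_const C).add hH'

theorem intervalIntegral_comp_mem_Icc_of_mapsTo (hH : IsLambdaExpHamiltonian l H)
    {y : ℝ → ℝ} {a b p q : ℝ} (hab : a ≤ b) (hy : ContinuousOn y (Icc a b))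
    (hpq : MapsTo y (Icc a b) (Icc p q)) :
    ∫ u in a..b, H (y u) ∈ Icc 0 ((b - a) * (H p + H q)) := by
  simpa using intervalIntegral_mem_Icc_of_mem_Icc hab (hH.continuous_coe.comp_continuousOn hy)
    fun u hu => ⟨hH.nonneg _, (hH.2.1.le_max_of_mem_Icc (mem_univ p) (mem_univ q) (hpq hu)).trans
      (max_le_add_of_nonneg (hH.nonneg p) (hH.nonneg q))⟩

theorem intervalIntegral_sub_mem_Icc_of_abs_le (hH : IsLambdaExpHamiltonian l H)
    {g Q : ℝ → ℝ} {a b A M : ℝ} (hab : a ≤ b) (hgQ : ContinuousOn (fun u => g u - Q u) (Icc a b))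
    (hg : ∀ u ∈ Icc a b, |g u| ≤ M) (hQ : ∀ u ∈ Icc a b, -A - 1 ≤ Q u ∧ Q u ≤ M + 1) :
    ∫ u in a..b, H ↑(g u - Q u) ∈ Icc 0 ((b - a) * (H ↑(-(2 * M + 1)) + H ↑(A + (M + 1)))) :=
  hH.intervalIntegral_comp_mem_Icc_of_mapsTo hab hgQ fun u hu => by
    have := abs_le.1 (hg u hu)
    have := hQ u hu
    constructor <;> linarith

theorem intervalIntegral_sub_mem_Icc_of_abs_sub_le (hH : IsLambdaExpHamiltonian l H)
    (hl : 0 ≤ l) {g Q : ℝ → ℝ} {A R ε c d x₀ η ρ : ℝ} (hcd : c ≤ d)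
    (hgQ : ContinuousOn (fun u => g u - Q u) (Icc c d))
    (hA : ∀ x, |x| ≤ R → H ↑(x + A) ∈ Icc (H A * (exp (l * x) - ε)) (H A * (exp (l * x) + ε)))
    (hR : |x₀| + η + ρ ≤ R) (hρ_up : exp (l * ρ) ≤ 1 + ε) (hρ_lo : 1 - ε ≤ exp (-(l * ρ)))
    (hg : ∀ u ∈ Icc c d, |g u - x₀| ≤ η) (hQ : ∀ u ∈ Icc c d, -A - ρ ≤ Q u ∧ Q u ≤ -A + ρ) :
    ∫ u in c..d, H ↑(g u - Q u) ∈
      Icc ((d - c) * H A * ((1 - ε) * exp (-(l * η)) * exp (l * x₀) - ε))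
        ((d - c) * H A * ((1 + ε) * exp (l * η) * exp (l * x₀) + ε)) := by
  rw [mul_assoc (d - c), mul_assoc (d - c)]
  refine intervalIntegral_mem_Icc_of_mem_Icc hcd (hH.continuous_coe.comp_continuousOn hgQ)
    fun u hu => ?_
  have hx : |g u - Q u - A - x₀| ≤ η + ρ := by
    have := abs_le.1 (hg u hu)
    have := hQ u hu
    rw [abs_le]
    constructor <;> linarith
  have hbound := hA (g u - Q u - A) (by linarith [abs_sub_abs_le_abs_sub (g u - Q u - A) x₀])
  rw [sub_add_cancel] at hbound
  have hexp := exp_mul_mem_Icc_of_abs_sub_le hl hx hρ_up hρ_lo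
  have hHA := hH.nonneg A
  exact ⟨le_trans (by gcongr; exact hexp.1) hbound.1, hbound.2.trans (by gcongr; exact hexp.2)⟩

theorem eventually_scale_bounds (hH : IsLambdaExpHamiltonian l H) (hl : 0 < l) (M : ℝ) {ε : ℝ}
    (hε : 0 < ε) :
    ∀ᶠ w : ℕ in atTop,
      (0 < H ↑(log w / l) ∧ ∀ x, |x| ≤ M + 2 → H ↑(x + log w / l) ∈
        Icc (H ↑(log w / l) * (exp (l * x) - ε)) (H ↑(log w / l) * (exp (l * x) + ε))) ∧
      2 * (w : ℝ) ^ (-(1 : ℝ) / 3) ≤ 1 ∧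
      exp (l * (2 * (w : ℝ) ^ (-(1 : ℝ) / 3))) ≤ 1 + ε ∧
      1 - ε ≤ exp (-(l * (2 * (w : ℝ) ^ (-(1 : ℝ) / 3)))) ∧
      (w : ℝ) ^ (-(2 : ℝ)) * (H ↑(-(2 * M + 1)) + H ↑(log w / l + (M + 1))) ≤ ε / 2 := by
  have hA : Tendsto (fun w : ℕ => log w / l) atTop atTop :=
    (tendsto_log_atTop.comp tendsto_natCast_atTop_atTop).atTop_div_const hl
  have hρ : Tendsto (fun w : ℕ => 2 * (w : ℝ) ^ (-(1 : ℝ) / 3)) atTop (𝓝 0) := by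
    simpa [neg_div] using ((tendsto_rpow_neg_atTop (by norm_num : (0 : ℝ) < 1 / 3)).comp
      tendsto_natCast_atTop_atTop).const_mul 2
  have hexp (s : ℝ) :
      Tendsto (fun w : ℕ => exp (s * (2 * (w : ℝ) ^ (-(1 : ℝ) / 3)))) atTop (𝓝 1) := by
    simpa using (hρ.const_mul s).rexp
  have hexp_lo := (hexp (-l)).eventually_const_le (by linarith : 1 - ε < 1)
  simp only [neg_mul] at hexp_lo
  exact (hA.eventually (hH.eventually_pos.and (hH.eventually_mem_Icc (M + 2) hε))).and <|
    (hρ.eventually_le_const one_pos).and <|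
    ((hexp l).eventually_le_const (by linarith : 1 < 1 + ε)).and <| hexp_lo.and <|
    (hH.tendsto_rpow_neg_two_mul hl _ _).eventually_le_const (half_pos hε)

end LineEnsembles.IsLambdaExpHamiltonian

theorem boltzmann_weight_two_sided_bound_general
    (l : ℝ) (hl : 0 < l) (H : EReal → ℝ) (hH : IsLambdaExpHamiltonian l H)
    (M β ε₁ : ℝ) (hβ : 0 < β) (hε₁ : ε₁ ∈ Set.Ioo (0 : ℝ) 1) :
    ∃ W₁ : ℕ,
      ∀ ε₂ : ℝ, ε₂ ∈ Set.Ioo (0 : ℝ) 1 →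
      ∀ w : ℕ, W₁ ≤ w →
      ∀ t : ℝ,
      ∀ Aw : ℝ, Aw = Real.log w / l →
      ∀ Vw : ℝ, Vw = (w : ℝ) ^ (-(1 : ℝ)/3) →
      ∀ cw : ℝ, cw = t - β / H ((Aw : ℝ) : EReal) →
      ∀ dw : ℝ, dw = t + β / H ((Aw : ℝ) : EReal) →
      ∀ aw : ℝ, aw = cw - (w : ℝ) ^ (-(2 : ℝ)) →
      ∀ bw : ℝ, bw = dw + (w : ℝ) ^ (-(2 : ℝ)) →
      ∀ g Q : ℝ → ℝ, ContinuousOn g (Set.Icc aw bw) → ContinuousOn Q (Set.Icc aw bw) →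
        (∀ u ∈ Set.Icc aw bw, |g u| ≤ M) →
        (∀ u ∈ Set.Icc aw bw, |g u - g t| ≤ ε₂) →
        (∀ u ∈ Set.Icc aw bw, (u ≤ cw ∨ dw ≤ u) → -Aw - 1 ≤ Q u ∧ Q u ≤ M + 1) →
        (∀ u ∈ Set.Icc cw dw, -Aw - 2 * Vw ≤ Q u ∧ Q u ≤ -Aw + 2 * Vw) →
        Real.exp (-ε₁ * (1 + 2 * β) -
            2 * β * (1 + ε₁) * Real.exp (l * ε₂) * Real.exp (l * g t)) ≤
          Real.exp (-(∫ u in Set.Icc aw bw, H ((g u - Q u : ℝ) : EReal))) ∧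
        Real.exp (-(∫ u in Set.Icc aw bw, H ((g u - Q u : ℝ) : EReal))) ≤
          Real.exp (2 * β * ε₁ -
            2 * β * (1 - ε₁) * Real.exp (-(l * ε₂)) * Real.exp (l * g t)) := by
  obtain ⟨W₁, hW₁⟩ := eventually_atTop.1 (hH.eventually_scale_bounds hl M hε₁.1)
  refine ⟨W₁, fun ε₂ hε₂ w hw t Aw hAw Vw hVw cw hcw dw hdw aw haw bw hbw g Q hg hQ hgM hgt
    hQout hQin => ?_⟩
  have hscale := hW₁ w hw
  rw [← hAw, ← hVw] at hscale
  obtain ⟨⟨hHA, hratio⟩, hρ, hρ_up, hρ_lo, hstub⟩ := hscale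
  obtain ⟨hac, hcd, hdb⟩ : aw ≤ cw ∧ cw ≤ dw ∧ dw ≤ bw := by
    have : 0 ≤ (w : ℝ) ^ (-(2 : ℝ)) := by positivity
    have := div_pos hβ hHA
    exact ⟨by linarith, by linarith, by linarith⟩
  have hcb : Icc cw dw ⊆ Icc aw bw := Icc_subset_Icc hac hdb
  have hgQ : ContinuousOn (fun u => g u - Q u) (Icc aw bw) := hg.sub hQ
  have hmid := hH.intervalIntegral_sub_mem_Icc_of_abs_sub_le hl.le hcd (hgQ.mono hcb) hratio
    (by linarith [hgM t (hcb ⟨by linarith, by linarith⟩), hε₂.2]) hρ_up hρ_lo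
    (fun u hu => hgt u (hcb hu)) hQin
  rw [show (dw - cw) * H Aw = 2 * β by rw [hcw, hdw]; field_simp; ring] at hmid
  have hab₁ : Icc aw cw ⊆ Icc aw bw := Icc_subset_Icc le_rfl (hcd.trans hdb)
  have hab₂ : Icc dw bw ⊆ Icc aw bw := Icc_subset_Icc (hac.trans hcd) le_rfl
  have h₁ := hH.intervalIntegral_sub_mem_Icc_of_abs_le hac (hgQ.mono hab₁)
    (fun u hu => hgM u (hab₁ hu)) fun u hu => hQout u (hab₁ hu) (.inl hu.2)
  have h₂ := hH.intervalIntegral_sub_mem_Icc_of_abs_le hdb (hgQ.mono hab₂)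
    (fun u hu => hgM u (hab₂ hu)) fun u hu => hQout u (hab₂ hu) (.inr hu.1)
  rw [show cw - aw = (w : ℝ) ^ (-(2 : ℝ)) by linarith] at h₁
  rw [show bw - dw = (w : ℝ) ^ (-(2 : ℝ)) by linarith] at h₂
  rw [setIntegral_Icc_eq_add_add (f := fun u => H ↑(g u - Q u)) hac hcd hdb
    (hH.continuous_coe.comp_continuousOn hgQ)]
  constructor <;> rw [exp_le_exp] <;> linarith [hmid.1, hmid.2, h₁.1, h₁.2, h₂.1, h₂.2]

/-- STATEMENT 19 -/
theorem boltzmann_weight_two_sided_bound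
    (l : ℝ) (hl : 0 < l) (H : EReal → ℝ) (hH : IsLambdaExpHamiltonian l H)
    (M β ε₁ : ℝ) (hM : 0 < M) (hβ : 0 < β) (hε₁ : ε₁ ∈ Set.Ioo (0 : ℝ) 1) :
    ∃ W₁ : ℕ,
      ∀ ε₂ : ℝ, ε₂ ∈ Set.Ioo (0 : ℝ) 1 →
      ∀ w : ℕ, W₁ ≤ w →
      ∀ t : ℝ,
      ∀ Aw : ℝ, Aw = Real.log w / l →
      ∀ Vw : ℝ, Vw = (w : ℝ) ^ (-(1 : ℝ)/3) →
      ∀ cw : ℝ, cw = t - β / H ((Aw : ℝ) : EReal) →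
      ∀ dw : ℝ, dw = t + β / H ((Aw : ℝ) : EReal) →
      ∀ aw : ℝ, aw = cw - (w : ℝ) ^ (-(2 : ℝ)) →
      ∀ bw : ℝ, bw = dw + (w : ℝ) ^ (-(2 : ℝ)) →
      ∀ g Q : ℝ → ℝ, ContinuousOn g (Set.Icc aw bw) → ContinuousOn Q (Set.Icc aw bw) →
        (∀ u ∈ Set.Icc aw bw, |g u| ≤ M) →
        (∀ u ∈ Set.Icc aw bw, |g u - g t| ≤ ε₂) →
        (∀ u ∈ Set.Icc aw bw, (u ≤ cw ∨ dw ≤ u) → -Aw - 1 ≤ Q u ∧ Q u ≤ M + 1) →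
        (∀ u ∈ Set.Icc cw dw, -Aw - 2 * Vw ≤ Q u ∧ Q u ≤ -Aw + 2 * Vw) →
        Real.exp (-ε₁ * (1 + 2 * β) -
            2 * β * (1 + ε₁) * Real.exp (l * ε₂) * Real.exp (l * g t)) ≤
          Real.exp (-(∫ u in Set.Icc aw bw, H ((g u - Q u : ℝ) : EReal))) ∧
        Real.exp (-(∫ u in Set.Icc aw bw, H ((g u - Q u : ℝ) : EReal))) ≤
          Real.exp (2 * β * ε₁ -
            2 * β * (1 - ε₁) * Real.exp (-(l * ε₂)) * Real.exp (l * g t)) :=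
  boltzmann_weight_two_sided_bound_general l hl H hH M β ε₁ hβ hε₁
end
end
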